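/- arXiv:2412.12904 — 4 statements merged into one kernel-verified Lean document; each statement's English description precedes it below -/
import Mathlib

section
/- Every even cycle C_{2k} (k ≥ 1) is Sidorenko: for every graph H, t(C_{2k}, H) ≥ t(K₂, H)^{2k}. -/
/-!
Let `A` be the adjacency matrix of `H` and `n = |V(H)|`. Counting closed walks gives
`t(C_{2k}, H) = tr(A^{2k}) / n^{2k}`, and `t(K₂, H) = 𝟙ᵀA𝟙 / n²`. Expanding `𝟙` in an orthonormal
eigenbasis of `A`, the Rayleigh quotient `𝟙ᵀA𝟙 / 𝟙ᵀ𝟙` is a weighted mean of the eigenvalues `λᵢ`,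
so by convexity of `x ↦ x^{2k}` its `2k`-th power is at most a weighted mean of the `λᵢ^{2k}`,
hence at most `∑ λᵢ^{2k} = tr(A^{2k})`.
-/

open Finset
open scoped Classical

/-- The homomorphism density `t(G, H)`: the probability that a uniformly random map
`V(G) → V(H)` is a graph homomorphism. -/
noncomputable def homDensity {V W : Type} [Fintype V] [Fintype W]
    (G : SimpleGraph V) (H : SimpleGraph W) : ℝ :=
  ((Finset.univ.filter
      (fun f : V → W => ∀ ⦃u v : V⦄, G.Adj u v → H.Adj (f u) (f v))).card : ℝ) /
    (Fintype.card W : ℝ) ^ (Fintype.card V)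

open Matrix

theorem pow_weighted_mean_le_sum_pow_of_even {ι : Type*} [Fintype ι] {p : ι → ℝ} (x : ι → ℝ)
    (hp : ∀ i, 0 ≤ p i) (hP : 0 < ∑ i, p i) {m : ℕ} (hm : Even m) :
    ((∑ i, p i * x i) / ∑ i, p i) ^ m ≤ ∑ i, x i ^ m := by
  set P := ∑ i, p i
  have hw : ∑ i, p i / P = 1 := by rw [← Finset.sum_div, div_self hP.ne']
  calc ((∑ i, p i * x i) / P) ^ m = (∑ i, p i / P * x i) ^ m := by
        simp only [Finset.sum_div, div_mul_eq_mul_div]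
    _ ≤ ∑ i, p i / P * x i ^ m :=
        Real.pow_arith_mean_le_arith_mean_pow_of_even _ _ _ (fun i _ => div_nonneg (hp i) hP.le)
          hw hm
    _ ≤ ∑ i, x i ^ m := by
        gcongr with i
        exact mul_le_of_le_one_left (hm.pow_nonneg _)
          (div_le_one_of_le₀ (Finset.single_le_sum (fun j _ => hp j) (Finset.mem_univ i)) hP.le)

namespace Matrix

section Walks

variable {ι R : Type*} [Fintype ι] [DecidableEq ι] [CommSemiring R]

/-- `f` lists the inner vertices of a walk from `a` to `b`. -/
lemma pow_succ_apply_eq_sum_prod (M : Matrix ι ι R) (m : ℕ) (a b : ι) :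
    (M ^ (m + 1)) a b = ∑ f : Fin m → ι,
      ∏ i, M (Fin.cons (α := fun _ => ι) a f i) (Fin.snoc (α := fun _ => ι) f b i) := by
  induction m generalizing a with
  | zero => simp [Fin.snoc_zero]
  | succ m ih =>
    rw [pow_succ', mul_apply, ← (Fin.consEquiv fun _ => ι).sum_comp, Fintype.sum_prod_type]
    refine Finset.sum_congr rfl fun c _ => ?_
    rw [ih, Finset.mul_sum]
    refine Finset.sum_congr rfl fun f _ => ?_
    simp [Fin.consEquiv, ← Fin.cons_snoc_eq_snoc_cons, Fin.prod_univ_succ]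

lemma trace_pow_succ_eq_sum_prod (M : Matrix ι ι R) (m : ℕ) :
    (M ^ (m + 1)).trace = ∑ f : Fin (m + 1) → ι, ∏ i, M (f i) (f (i + 1)) := by
  rw [← (Fin.consEquiv fun _ => ι).sum_comp, Fintype.sum_prod_type]
  refine Finset.sum_congr rfl fun a _ => ?_
  rw [diag_apply, pow_succ_apply_eq_sum_prod]
  refine Finset.sum_congr rfl fun f _ => Finset.prod_congr rfl fun i _ => ?_
  simp [Fin.consEquiv, Fin.snoc_eq_cons_rotate]

end Walks

namespace IsHermitian

variable {ι : Type*} [Fintype ι] [DecidableEq ι] {A : Matrix ι ι ℝ}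

lemma pow_eq_mul_diagonal_mul (hA : A.IsHermitian) (m : ℕ) :
    A ^ m = (hA.eigenvectorUnitary : Matrix ι ι ℝ) * diagonal (hA.eigenvalues ^ m) *
      (hA.eigenvectorUnitary : Matrix ι ι ℝ)ᵀ := by
  conv_lhs => rw [hA.spectral_theorem]
  rw [← map_pow, diagonal_pow, Unitary.conjStarAlgAut_apply, star_eq_conjTranspose,
    conjTranspose_eq_transpose_of_trivial]
  rfl

lemma trace_pow (hA : A.IsHermitian) (m : ℕ) :
    (A ^ m).trace = ∑ i, hA.eigenvalues i ^ m := by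
  rw [hA.pow_eq_mul_diagonal_mul, trace_mul_cycle, ← conjTranspose_eq_transpose_of_trivial,
    ← star_eq_conjTranspose, Unitary.coe_star_mul_self, one_mul, trace_diagonal]
  rfl

lemma dotProduct_pow_mulVec (hA : A.IsHermitian) (v : ι → ℝ) (m : ℕ) :
    v ⬝ᵥ (A ^ m *ᵥ v) =
      ∑ i, ((hA.eigenvectorUnitary : Matrix ι ι ℝ)ᵀ *ᵥ v) i ^ 2 * hA.eigenvalues i ^ m := by
  rw [hA.pow_eq_mul_diagonal_mul, ← mulVec_mulVec, ← mulVec_mulVec, dotProduct_mulVec,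
    ← mulVec_transpose, dotProduct]
  refine Finset.sum_congr rfl fun i _ => ?_
  rw [mulVec_diagonal, Pi.pow_apply]
  ring

theorem rayleigh_quotient_pow_le_trace_pow (hA : A.IsHermitian) {v : ι → ℝ} (hv : v ≠ 0)
    {m : ℕ} (hm : Even m) :
    ((v ⬝ᵥ (A *ᵥ v)) / (v ⬝ᵥ v)) ^ m ≤ (A ^ m).trace := by
  have hv_pos : 0 < v ⬝ᵥ v := lt_of_le_of_ne (Finset.sum_nonneg fun i _ => mul_self_nonneg (v i))
    (Ne.symm (dotProduct_self_eq_zero.not.mpr hv))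
  have h_one := hA.dotProduct_pow_mulVec v 1
  have h_zero := hA.dotProduct_pow_mulVec v 0
  simp only [pow_one, pow_zero, one_mulVec, mul_one] at h_one h_zero
  rw [h_zero] at hv_pos
  rw [h_one, h_zero, hA.trace_pow]
  exact pow_weighted_mean_le_sum_pow_of_even _ (fun i => sq_nonneg _) hv_pos hm

end IsHermitian

end Matrix

namespace SimpleGraph

variable {W : Type} [Fintype W]

/-- Trades the classical `DecidableEq V` used inside `homDensity` for the given instance. -/
lemma homDensity_eq_sum {V : Type} [Fintype V] [DecidableEq V] (G : SimpleGraph V)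
    (H : SimpleGraph W) :
    homDensity G H = (∑ f : V → W, if ∀ ⦃u v⦄, G.Adj u v → H.Adj (f u) (f v) then 1 else 0) /
      (Fintype.card W : ℝ) ^ Fintype.card V := by
  rw [homDensity, Finset.natCast_card_filter]
  congr!

lemma cycleGraph_hom_iff {α : Type*} (H : SimpleGraph α) {m : ℕ} (f : Fin (m + 2) → α) :
    (∀ ⦃u v⦄, (cycleGraph (m + 2)).Adj u v → H.Adj (f u) (f v)) ↔
      ∀ i, H.Adj (f i) (f (i + 1)) := by
  refine ⟨fun h i => h (cycleGraph_adj.mpr (Or.inr (add_sub_cancel_left i 1))), ?_⟩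
  rintro h u v (huv | huv)
  · rw [sub_eq_iff_eq_add'.mp huv]
    exact (h v).symm
  · rw [sub_eq_iff_eq_add'.mp huv]
    exact h u

theorem homDensity_cycleGraph (H : SimpleGraph W) (m : ℕ) :
    homDensity (cycleGraph (m + 2)) H =
      ((H.adjMatrix ℝ) ^ (m + 2)).trace / (Fintype.card W : ℝ) ^ (m + 2) := by
  rw [homDensity_eq_sum, Fintype.card_fin, trace_pow_succ_eq_sum_prod]
  simp only [cycleGraph_hom_iff, adjMatrix_apply, Finset.prod_boole, Finset.mem_univ,
    true_implies]

theorem homDensity_top_fin_two (H : SimpleGraph W) :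
    homDensity (⊤ : SimpleGraph (Fin 2)) H =
      1 ⬝ᵥ (H.adjMatrix ℝ *ᵥ 1) / (Fintype.card W : ℝ) ^ 2 := by
  have hom_iff (f : Fin 2 → W) :
      (∀ ⦃u v⦄, (⊤ : SimpleGraph (Fin 2)).Adj u v → H.Adj (f u) (f v)) ↔ H.Adj (f 0) (f 1) := by
    refine ⟨fun h => h (by decide), fun h u v huv => ?_⟩
    fin_cases u <;> fin_cases v <;> simp_all [H.adj_comm]
  rw [homDensity_eq_sum, Fintype.card_fin, dotProduct_mulVec_adjMatrix,
    ← (finTwoArrowEquiv W).symm.sum_comp, Fintype.sum_prod_type]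
  simp only [hom_iff]
  simp

end SimpleGraph

open SimpleGraph in
/-- Every even cycle `C_{2k}`, `k ≥ 1`, is Sidorenko. -/
theorem even_cycle_sidorenko (k : ℕ) (hk : 1 ≤ k) {W : Type} [Fintype W] (H : SimpleGraph W) :
    homDensity (SimpleGraph.cycleGraph (2 * k)) H
      ≥ homDensity (⊤ : SimpleGraph (Fin 2)) H ^ (2 * k) := by
  obtain ⟨m, hm⟩ : ∃ m, 2 * k = m + 2 := ⟨2 * k - 2, by omega⟩
  have h_even : Even (m + 2) := hm ▸ even_two_mul k
  rw [hm, homDensity_cycleGraph, homDensity_top_fin_two, ge_iff_le]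
  rcases isEmpty_or_nonempty W with _ | _
  · simp
  have key := (H.isHermitian_adjMatrix ℝ).rayleigh_quotient_pow_le_trace_pow one_ne_zero h_even
  rw [one_dotProduct_one] at key
  calc (1 ⬝ᵥ (H.adjMatrix ℝ *ᵥ 1) / (Fintype.card W : ℝ) ^ 2) ^ (m + 2)
      = (1 ⬝ᵥ (H.adjMatrix ℝ *ᵥ 1) / Fintype.card W) ^ (m + 2) /
          (Fintype.card W : ℝ) ^ (m + 2) := by
        rw [sq, ← div_div, div_pow]
    _ ≤ _ := by gcongr
end

section
/- Goodman's bound: for every graph H on n vertices, the homomorphism densities satisfy t(K₃, H) ≥ 2·t(K₂,H)² − t(K₂,H); equivalently t(K₃,H) ≥ t(K₂,H)·(2·t(K₂,H) − 1). -/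
open Finset
open scoped Classical

section Aux

variable {W : Type} [Fintype W] (H : SimpleGraph W)

lemma count2_eq :
    ((Finset.univ.filter
      (fun f : Fin 2 → W => ∀ ⦃u v : Fin 2⦄, (⊤ : SimpleGraph (Fin 2)).Adj u v → H.Adj (f u) (f v))).card)
      = ∑ a : W, (univ.filter (H.Adj a)).card := by
  rw [Finset.card_filter]
  have h1 : ∀ f : Fin 2 → W,
      (∀ ⦃u v : Fin 2⦄, (⊤ : SimpleGraph (Fin 2)).Adj u v → H.Adj (f u) (f v)) ↔
      H.Adj (f 0) (f 1) := by
    intro f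
    constructor
    · intro h; exact h (by decide)
    · intro h u v huv
      fin_cases u <;> fin_cases v <;> simp_all <;> exact H.adj_symm h
  calc (∑ f : Fin 2 → W, if (∀ ⦃u v : Fin 2⦄, (⊤ : SimpleGraph (Fin 2)).Adj u v → H.Adj (f u) (f v)) then 1 else 0)
      = ∑ f : Fin 2 → W, if H.Adj (f 0) (f 1) then 1 else 0 := by
        refine Finset.sum_congr rfl fun f _ => ?_
        exact if_congr (h1 f) rfl rfl
    _ = ∑ p : W × W, if H.Adj p.1 p.2 then 1 else 0 := by
        exact Fintype.sum_equiv (piFinTwoEquiv fun _ => W) _ _ (fun f => rfl)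
    _ = ∑ a : W, ∑ b : W, if H.Adj a b then 1 else 0 := Fintype.sum_prod_type _
    _ = ∑ a : W, (univ.filter (H.Adj a)).card := by
        refine Finset.sum_congr rfl fun a _ => ?_
        rw [Finset.card_filter]

lemma count3_eq :
    ((Finset.univ.filter
      (fun f : Fin 3 → W => ∀ ⦃u v : Fin 3⦄, (⊤ : SimpleGraph (Fin 3)).Adj u v → H.Adj (f u) (f v))).card)
      = ∑ a : W, ∑ b : W, if H.Adj a b then
          (univ.filter (fun c => H.Adj a c ∧ H.Adj b c)).card else 0 := by
  rw [Finset.card_filter]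
  have h1 : ∀ f : Fin 3 → W,
      (∀ ⦃u v : Fin 3⦄, (⊤ : SimpleGraph (Fin 3)).Adj u v → H.Adj (f u) (f v)) ↔
      (H.Adj (f 0) (f 1) ∧ H.Adj (f 0) (f 2) ∧ H.Adj (f 1) (f 2)) := by
    intro f
    constructor
    · intro h; exact ⟨h (by decide), h (by decide), h (by decide)⟩
    · rintro ⟨h1, h2, h3⟩ u v huv
      fin_cases u <;> fin_cases v <;> simp_all <;>
        first | exact H.adj_symm h1 | exact H.adj_symm h2 | exact H.adj_symm h3
  calc (∑ f : Fin 3 → W, if (∀ ⦃u v : Fin 3⦄, (⊤ : SimpleGraph (Fin 3)).Adj u v → H.Adj (f u) (f v)) then 1 else 0)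
      = ∑ f : Fin 3 → W, if (H.Adj (f 0) (f 1) ∧ H.Adj (f 0) (f 2) ∧ H.Adj (f 1) (f 2)) then 1 else 0 := by
        refine Finset.sum_congr rfl fun f _ => ?_
        exact if_congr (h1 f) rfl rfl
    _ = ∑ p : W × W × W, if (H.Adj p.1 p.2.1 ∧ H.Adj p.1 p.2.2 ∧ H.Adj p.2.1 p.2.2) then 1 else 0 := by
        exact Fintype.sum_equiv ((Fin.consEquiv (fun _ => W)).symm.trans (Equiv.prodCongr (Equiv.refl W) (piFinTwoEquiv fun _ => W))) _ _ (fun f => rfl)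
    _ = ∑ a : W, ∑ p : W × W, if (H.Adj a p.1 ∧ H.Adj a p.2 ∧ H.Adj p.1 p.2) then 1 else 0 :=
        Fintype.sum_prod_type _
    _ = ∑ a : W, ∑ b : W, ∑ c : W, if (H.Adj a b ∧ H.Adj a c ∧ H.Adj b c) then 1 else 0 := by
        exact Finset.sum_congr rfl fun a _ => Fintype.sum_prod_type _
    _ = ∑ a : W, ∑ b : W, if H.Adj a b then
          (univ.filter (fun c => H.Adj a c ∧ H.Adj b c)).card else 0 := by
        refine Finset.sum_congr rfl fun a _ => Finset.sum_congr rfl fun b _ => ?_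
        by_cases hab : H.Adj a b
        · simp only [hab, if_true, true_and, Finset.card_filter]
        · simp [hab]

lemma codeg_bound (a b : W) :
    (univ.filter (H.Adj a)).card + (univ.filter (H.Adj b)).card ≤
      (univ.filter (fun c => H.Adj a c ∧ H.Adj b c)).card + Fintype.card W := by
  have h1 : (univ.filter (fun c => H.Adj a c ∧ H.Adj b c)) =
      (univ.filter (H.Adj a)) ∩ (univ.filter (H.Adj b)) := Finset.filter_and _ _ _
  rw [h1]
  have := Finset.card_inter_add_card_union (univ.filter (H.Adj a)) (univ.filter (H.Adj b))
  have h2 : ((univ.filter (H.Adj a)) ∪ (univ.filter (H.Adj b))).card ≤ Fintype.card W :=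
    Finset.card_le_card (Finset.subset_univ _)
  omega

lemma main_count :
    2 * ∑ a : W, (univ.filter (H.Adj a)).card ^ 2 ≤
      (∑ a : W, ∑ b : W, if H.Adj a b then
          (univ.filter (fun c => H.Adj a c ∧ H.Adj b c)).card else 0)
      + Fintype.card W * ∑ a : W, (univ.filter (H.Adj a)).card := by
  set d : W → ℕ := fun a => (univ.filter (H.Adj a)).card with hd
  have key : ∑ a : W, ∑ b : W, (if H.Adj a b then d a + d b else 0) ≤
      (∑ a : W, ∑ b : W, if H.Adj a b then
          (univ.filter (fun c => H.Adj a c ∧ H.Adj b c)).card + Fintype.card W else 0) := by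
    refine Finset.sum_le_sum fun a _ => Finset.sum_le_sum fun b _ => ?_
    by_cases hab : H.Adj a b
    · simpa [hab] using codeg_bound H a b
    · simp [hab]
  have split : ∑ a : W, ∑ b : W, (if H.Adj a b then
          (univ.filter (fun c => H.Adj a c ∧ H.Adj b c)).card + Fintype.card W else 0)
      = (∑ a : W, ∑ b : W, if H.Adj a b then
          (univ.filter (fun c => H.Adj a c ∧ H.Adj b c)).card else 0)
        + Fintype.card W * ∑ a : W, d a := by
    have : ∀ a b : W, (if H.Adj a b then
          (univ.filter (fun c => H.Adj a c ∧ H.Adj b c)).card + Fintype.card W else 0)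
        = (if H.Adj a b then
          (univ.filter (fun c => H.Adj a c ∧ H.Adj b c)).card else 0)
          + Fintype.card W * (if H.Adj a b then 1 else 0) := by
      intro a b; by_cases hab : H.Adj a b <;> simp [hab]
    simp_rw [this, Finset.sum_add_distrib, ← Finset.mul_sum]
    congr 1
    congr 1
    exact Finset.sum_congr rfl fun a _ => (Finset.card_filter _ _).symm
  have lhs_eq : ∑ a : W, ∑ b : W, (if H.Adj a b then d a + d b else 0)
      = 2 * ∑ a : W, d a ^ 2 := by
    have e1 : ∀ a b : W, (if H.Adj a b then d a + d b else 0)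
        = (if H.Adj a b then 1 else 0) * d a + (if H.Adj a b then 1 else 0) * d b := by
      intro a b; by_cases hab : H.Adj a b <;> simp [hab]
    simp_rw [e1, Finset.sum_add_distrib]
    have e2 : ∀ a : W, ∑ b : W, (if H.Adj a b then 1 else 0) * d a = d a ^ 2 := by
      intro a
      rw [← Finset.sum_mul, ← Finset.card_filter, sq]
    have e3 : ∑ a : W, ∑ b : W, (if H.Adj a b then 1 else 0) * d b
        = ∑ a : W, d a ^ 2 := by
      rw [Finset.sum_comm]
      refine Finset.sum_congr rfl fun b _ => ?_
      rw [← Finset.sum_mul, sq]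
      congr 1
      rw [← Finset.card_filter]
      congr 1
      refine Finset.filter_congr fun a _ => ?_
      exact ⟨fun h => H.adj_symm h, fun h => H.adj_symm h⟩
    rw [e3]
    simp_rw [e2]
    ring
  have hdd : 2 * ∑ a : W, (univ.filter (H.Adj a)).card ^ 2 = 2 * ∑ a : W, d a ^ 2 := rfl
  rw [hdd, ← lhs_eq]
  exact key.trans (le_of_eq split)

end Aux

/-- Goodman's bound: `t(K₃,H) ≥ t(K₂,H)·(2·t(K₂,H) − 1)` for every graph `H`. -/
theorem goodman_bound {W : Type} [Fintype W] (H : SimpleGraph W) :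
    homDensity (⊤ : SimpleGraph (Fin 3)) H
      ≥ homDensity (⊤ : SimpleGraph (Fin 2)) H *
        (2 * homDensity (⊤ : SimpleGraph (Fin 2)) H - 1) := by
  classical
  rcases Nat.eq_zero_or_pos (Fintype.card W) with hn0 | hn0
  · simp [homDensity, hn0]
  set n : ℝ := (Fintype.card W : ℝ) with hnn
  have hn : (0 : ℝ) < n := by rw [hnn]; exact_mod_cast hn0
  set N2 : ℕ := (Finset.univ.filter
      (fun f : Fin 2 → W => ∀ ⦃u v : Fin 2⦄, (⊤ : SimpleGraph (Fin 2)).Adj u v → H.Adj (f u) (f v))).card with hN2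
  set N3 : ℕ := (Finset.univ.filter
      (fun f : Fin 3 → W => ∀ ⦃u v : Fin 3⦄, (⊤ : SimpleGraph (Fin 3)).Adj u v → H.Adj (f u) (f v))).card with hN3
  have h2 : homDensity (⊤ : SimpleGraph (Fin 2)) H = (N2 : ℝ) / n ^ 2 := by
    rw [hN2, hnn]; simp only [homDensity, Fintype.card_fin]; congr!
  have h3 : homDensity (⊤ : SimpleGraph (Fin 3)) H = (N3 : ℝ) / n ^ 3 := by
    rw [hN3, hnn]; simp only [homDensity, Fintype.card_fin]; congr!
  set S : ℕ := ∑ a : W, (univ.filter (H.Adj a)).card ^ 2 with hS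
  -- counting inequality in ℝ
  have hC : 2 * (S : ℝ) ≤ (N3 : ℝ) + n * N2 := by
    have := main_count H
    rw [← count3_eq H] at this
    rw [hN3, hN2, count2_eq H, hnn, hS]
    exact_mod_cast this
  -- Cauchy–Schwarz
  have hCS : (N2 : ℝ) ^ 2 ≤ n * S := by
    have h := sq_sum_le_card_mul_sum_sq (s := (univ : Finset W))
      (f := fun a => ((univ.filter (H.Adj a)).card : ℝ))
    have hl : (∑ a : W, ((univ.filter (H.Adj a)).card : ℝ)) = (N2 : ℝ) := by
      rw [hN2, count2_eq H]
      push_cast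
      rfl
    have hr : (∑ a : W, ((univ.filter (H.Adj a)).card : ℝ) ^ 2) = (S : ℝ) := by
      rw [hS]; push_cast; rfl
    rw [hl, hr] at h
    simpa [hnn, Finset.card_univ] using h
  have key : 2 * (N2 : ℝ) ^ 2 - n ^ 2 * N2 ≤ (N3 : ℝ) * n := by
    nlinarith [hC, hCS, hn, Nat.cast_nonneg (α := ℝ) N2, Nat.cast_nonneg (α := ℝ) N3]
  rw [h2, h3, ge_iff_le, ← sub_nonneg]
  have hexpr : (N3 : ℝ) / n ^ 3 - (N2 : ℝ) / n ^ 2 * (2 * ((N2 : ℝ) / n ^ 2) - 1)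
      = ((N3 : ℝ) * n - (2 * (N2 : ℝ) ^ 2 - n ^ 2 * N2)) / n ^ 4 := by
    field_simp
  rw [hexpr]
  apply div_nonneg
  · linarith [key]
  · positivity
end

section
/- A p-quasi-random sequence is forced by edges and C₄: if a sequence of graphs (H_n) of increasing order satisfies t(K₂, H_n) → p and t(C₄, H_n) → p⁴, then t(P₂, H_n) → p². (Degree-regularity consequence of Chung–Graham–Wilson.) -/
open Finset
open scoped Classical

section
variable {W : Type} [Fintype W] (H : SimpleGraph W)

noncomputable def eI (H : SimpleGraph W) (a b : W) : ℝ := if H.Adj a b then 1 else 0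

lemma sum_split {n : ℕ} (g : (Fin (n+1) → W) → ℝ) :
    ∑ f : Fin (n+1) → W, g f = ∑ a : W, ∑ f : Fin n → W, g (Fin.cons a f) := by
  rw [← (Fin.consEquiv (fun _ : Fin (n+1) => W)).sum_comp g, Fintype.sum_prod_type]
  rfl

lemma adj_iff2 (f : Fin 2 → W) :
    (∀ ⦃u v : Fin 2⦄, (⊤ : SimpleGraph (Fin 2)).Adj u v → H.Adj (f u) (f v)) ↔ H.Adj (f 0) (f 1) := by
  constructor
  · intro h; exact h (by simp)
  · intro h u v huv
    fin_cases u <;> fin_cases v <;> simp_all <;> exact h.symm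

lemma adj_iff3 (f : Fin 3 → W) :
    (∀ ⦃u v : Fin 3⦄, (SimpleGraph.pathGraph 3).Adj u v → H.Adj (f u) (f v)) ↔
      H.Adj (f 0) (f 1) ∧ H.Adj (f 1) (f 2) := by
  constructor
  · intro h; exact ⟨h (by simp [SimpleGraph.pathGraph_adj]), h (by simp [SimpleGraph.pathGraph_adj])⟩
  · rintro ⟨h1, h2⟩ u v huv
    fin_cases u <;> fin_cases v <;> simp_all [SimpleGraph.pathGraph_adj] <;> first | exact h1.symm | exact h2.symm

lemma adj_iff4 (f : Fin 4 → W) :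
    (∀ ⦃u v : Fin 4⦄, (SimpleGraph.cycleGraph 4).Adj u v → H.Adj (f u) (f v)) ↔
      H.Adj (f 0) (f 1) ∧ H.Adj (f 1) (f 2) ∧ H.Adj (f 2) (f 3) ∧ H.Adj (f 3) (f 0) := by
  constructor
  · intro h
    refine ⟨h ?_, h ?_, h ?_, h ?_⟩ <;> rw [SimpleGraph.cycleGraph_adj] <;> decide
  · rintro ⟨h1, h2, h3, h4⟩ u v huv
    rw [SimpleGraph.cycleGraph_adj] at huv
    fin_cases u <;> fin_cases v <;> simp_all <;>
      first | exact h1.symm | exact h2.symm | exact h3.symm | exact h4.symm | exact absurd huv (by decide)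

end

section
variable {W : Type} [Fintype W] (H : SimpleGraph W)

lemma ce21 (a : W) (f : Fin 1 → W) : (Fin.cons a f : Fin 2 → W) 1 = f 0 := rfl
lemma ce31 (a : W) (f : Fin 2 → W) : (Fin.cons a f : Fin 3 → W) 1 = f 0 := rfl
lemma ce32 (a : W) (f : Fin 2 → W) : (Fin.cons a f : Fin 3 → W) 2 = f 1 := rfl
lemma ce41 (a : W) (f : Fin 3 → W) : (Fin.cons a f : Fin 4 → W) 1 = f 0 := rfl
lemma ce42 (a : W) (f : Fin 3 → W) : (Fin.cons a f : Fin 4 → W) 2 = f 1 := rfl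
lemma ce43 (a : W) (f : Fin 3 → W) : (Fin.cons a f : Fin 4 → W) 3 = f 2 := rfl

lemma count2 :
    ((Finset.univ.filter
      (fun f : Fin 2 → W => ∀ ⦃u v : Fin 2⦄, (⊤ : SimpleGraph (Fin 2)).Adj u v → H.Adj (f u) (f v))).card : ℝ)
      = ∑ a : W, ∑ b : W, eI H a b := by
  rw [Finset.card_filter]
  push_cast
  simp only [adj_iff2]
  rw [sum_split]
  refine Finset.sum_congr rfl fun a _ => ?_
  rw [sum_split]
  refine Finset.sum_congr rfl fun b _ => ?_
  rw [Fintype.sum_unique]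
  simp [eI, Fin.cons_zero, ce21]

lemma count3 :
    ((Finset.univ.filter
      (fun f : Fin 3 → W => ∀ ⦃u v : Fin 3⦄, (SimpleGraph.pathGraph 3).Adj u v → H.Adj (f u) (f v))).card : ℝ)
      = ∑ a : W, ∑ b : W, ∑ c : W, eI H a b * eI H b c := by
  rw [Finset.card_filter]
  push_cast
  simp only [adj_iff3]
  rw [sum_split]
  refine Finset.sum_congr rfl fun a _ => ?_
  rw [sum_split]
  refine Finset.sum_congr rfl fun b _ => ?_
  rw [sum_split]
  refine Finset.sum_congr rfl fun c _ => ?_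
  rw [Fintype.sum_unique]
  simp only [Fin.cons_zero, ce21, ce31, ce32, eI]
  by_cases h1 : H.Adj a b <;> by_cases h2 : H.Adj b c <;> simp [h1, h2]

lemma count4 :
    ((Finset.univ.filter
      (fun f : Fin 4 → W => ∀ ⦃u v : Fin 4⦄, (SimpleGraph.cycleGraph 4).Adj u v → H.Adj (f u) (f v))).card : ℝ)
      = ∑ a : W, ∑ b : W, ∑ c : W, ∑ d : W, eI H a b * eI H b c * eI H c d * eI H d a := by
  rw [Finset.card_filter]
  push_cast
  simp only [adj_iff4]
  rw [sum_split]
  refine Finset.sum_congr rfl fun a _ => ?_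
  rw [sum_split]
  refine Finset.sum_congr rfl fun b _ => ?_
  rw [sum_split]
  refine Finset.sum_congr rfl fun c _ => ?_
  rw [sum_split]
  refine Finset.sum_congr rfl fun d _ => ?_
  rw [Fintype.sum_unique]
  simp only [Fin.cons_zero, ce21, ce31, ce32, ce41, ce42, ce43, eI]
  by_cases h1 : H.Adj a b <;> by_cases h2 : H.Adj b c <;> by_cases h3 : H.Adj c d <;>
    by_cases h4 : H.Adj d a <;> simp [h1, h2, h3, h4]

end

section
variable {W : Type} [Fintype W] (H : SimpleGraph W)

lemma eSymm (a b : W) : eI H a b = eI H b a := by simp [eI, SimpleGraph.adj_comm]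

lemma eNonneg (a b : W) : 0 ≤ eI H a b := by unfold eI; positivity

lemma S2_eq :
    (∑ a : W, ∑ b : W, ∑ c : W, eI H a b * eI H b c) = ∑ b : W, (∑ a : W, eI H a b) ^ 2 := by
  rw [Finset.sum_comm]
  refine Finset.sum_congr rfl fun b _ => ?_
  rw [sq, Finset.sum_mul_sum]
  refine Finset.sum_congr rfl fun a _ => Finset.sum_congr rfl fun c _ => ?_
  rw [eSymm H c b]

lemma S4_eq :
    (∑ a : W, ∑ b : W, ∑ c : W, ∑ d : W, eI H a b * eI H b c * eI H c d * eI H d a)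
      = ∑ a : W, ∑ c : W, (∑ b : W, eI H a b * eI H b c) ^ 2 := by
  refine Finset.sum_congr rfl fun a _ => ?_
  rw [Finset.sum_comm]
  refine Finset.sum_congr rfl fun c _ => ?_
  rw [sq, Finset.sum_mul_sum]
  refine Finset.sum_congr rfl fun b _ => Finset.sum_congr rfl fun d _ => ?_
  rw [eSymm H c d, eSymm H d a]
  ring

lemma hd2 : homDensity (⊤ : SimpleGraph (Fin 2)) H
    = (∑ b : W, ∑ a : W, eI H a b) / (Fintype.card W : ℝ) ^ 2 := by
  have h : homDensity (⊤ : SimpleGraph (Fin 2)) H =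
      ((Finset.univ.filter
        (fun f : Fin 2 → W => ∀ ⦃u v : Fin 2⦄, (⊤ : SimpleGraph (Fin 2)).Adj u v → H.Adj (f u) (f v))).card : ℝ) /
      (Fintype.card W : ℝ) ^ 2 := by
    unfold homDensity; rw [Fintype.card_fin]; congr!
  rw [h, count2 H, Finset.sum_comm]

lemma hd3 : homDensity (SimpleGraph.pathGraph 3) H
    = (∑ b : W, (∑ a : W, eI H a b) ^ 2) / (Fintype.card W : ℝ) ^ 3 := by
  have h : homDensity (SimpleGraph.pathGraph 3) H =
      ((Finset.univ.filter
        (fun f : Fin 3 → W => ∀ ⦃u v : Fin 3⦄, (SimpleGraph.pathGraph 3).Adj u v → H.Adj (f u) (f v))).card : ℝ) /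
      (Fintype.card W : ℝ) ^ 3 := by
    unfold homDensity; rw [Fintype.card_fin]; congr!
  rw [h, count3 H, S2_eq]

lemma hd4 : homDensity (SimpleGraph.cycleGraph 4) H
    = (∑ a : W, ∑ c : W, (∑ b : W, eI H a b * eI H b c) ^ 2) / (Fintype.card W : ℝ) ^ 4 := by
  have h : homDensity (SimpleGraph.cycleGraph 4) H =
      ((Finset.univ.filter
        (fun f : Fin 4 → W => ∀ ⦃u v : Fin 4⦄, (SimpleGraph.cycleGraph 4).Adj u v → H.Adj (f u) (f v))).card : ℝ) /
      (Fintype.card W : ℝ) ^ 4 := by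
    unfold homDensity; rw [Fintype.card_fin]; congr!
  rw [h, count4 H, S4_eq]

lemma ineq1 : homDensity (⊤ : SimpleGraph (Fin 2)) H ^ 2 ≤ homDensity (SimpleGraph.pathGraph 3) H := by
  rw [hd2, hd3]
  rcases Nat.eq_zero_or_pos (Fintype.card W) with hN | hN
  · have : IsEmpty W := Fintype.card_eq_zero_iff.mp hN
    simp
  · have hNpos : (0:ℝ) < (Fintype.card W : ℝ) := by exact_mod_cast hN
    set N : ℝ := (Fintype.card W : ℝ)
    set d : W → ℝ := fun b => ∑ a : W, eI H a b with hd
    have hcs : (∑ b : W, d b) ^ 2 ≤ N * ∑ b : W, d b ^ 2 := by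
      have := sq_sum_le_card_mul_sum_sq (s := (Finset.univ : Finset W)) (f := d)
      simpa [N] using this
    rw [div_pow, div_le_div_iff₀ (by positivity) (by positivity)]
    calc ((∑ b : W, d b) ^ 2) * N ^ 3 ≤ (N * ∑ b : W, d b ^ 2) * N ^ 3 :=
          mul_le_mul_of_nonneg_right hcs (by positivity)
      _ = (∑ b : W, d b ^ 2) * (N ^ 2) ^ 2 := by ring

lemma ineq2 : homDensity (SimpleGraph.pathGraph 3) H ^ 2 ≤ homDensity (SimpleGraph.cycleGraph 4) H := by
  rw [hd3, hd4]
  rcases Nat.eq_zero_or_pos (Fintype.card W) with hN | hN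
  · have : IsEmpty W := Fintype.card_eq_zero_iff.mp hN
    simp
  · have hNpos : (0:ℝ) < (Fintype.card W : ℝ) := by exact_mod_cast hN
    set N : ℝ := (Fintype.card W : ℝ)
    set cod : W × W → ℝ := fun p => ∑ b : W, eI H p.1 b * eI H b p.2 with hcod
    have h1 : (∑ b : W, (∑ a : W, eI H a b) ^ 2) = ∑ p : W × W, cod p := by
      rw [Fintype.sum_prod_type]
      rw [← S2_eq]
      refine Finset.sum_congr rfl fun a _ => ?_
      exact Finset.sum_comm
    have h2 : (∑ a : W, ∑ c : W, (∑ b : W, eI H a b * eI H b c) ^ 2) = ∑ p : W × W, cod p ^ 2 := by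
      rw [Fintype.sum_prod_type]
    rw [h1, h2]
    have hcs : (∑ p : W × W, cod p) ^ 2 ≤ N ^ 2 * ∑ p : W × W, cod p ^ 2 := by
      have := sq_sum_le_card_mul_sum_sq (s := (Finset.univ : Finset (W × W))) (f := cod)
      simpa [N, Fintype.card_prod, sq] using this
    rw [div_pow, div_le_div_iff₀ (by positivity) (by positivity)]
    calc ((∑ p : W × W, cod p) ^ 2) * N ^ 4 ≤ (N ^ 2 * ∑ p : W × W, cod p ^ 2) * N ^ 4 :=
          mul_le_mul_of_nonneg_right hcs (by positivity)
      _ = (∑ p : W × W, cod p ^ 2) * (N ^ 3) ^ 2 := by ring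

lemma homDensity_nonneg {V : Type} [Fintype V] (G : SimpleGraph V) : 0 ≤ homDensity G H :=
  div_nonneg (Nat.cast_nonneg _) (by positivity)

end

open Filter Topology

/-- Degree-regularity consequence of Chung–Graham–Wilson: if `t(K₂,Hₙ) → p` and
`t(C₄,Hₙ) → p⁴` along a sequence of graphs of increasing order, then `t(P₂,Hₙ) → p²`. -/
theorem forced_path_density (p : ℝ) (V : ℕ → Type) [∀ n, Fintype (V n)]
    (H : ∀ n, SimpleGraph (V n))
    (hmono : StrictMono (fun n => Fintype.card (V n)))
    (hedge : Tendsto (fun n => homDensity (⊤ : SimpleGraph (Fin 2)) (H n)) atTop (𝓝 p))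
    (hC4 : Tendsto (fun n => homDensity (SimpleGraph.cycleGraph 4) (H n)) atTop (𝓝 (p ^ 4))) :
    Tendsto (fun n => homDensity (SimpleGraph.pathGraph 3) (H n)) atTop (𝓝 (p ^ 2)) := by
  have hlow : Tendsto (fun n => homDensity (⊤ : SimpleGraph (Fin 2)) (H n) ^ 2) atTop (𝓝 (p ^ 2)) :=
    hedge.pow 2
  have hhigh : Tendsto (fun n => Real.sqrt (homDensity (SimpleGraph.cycleGraph 4) (H n))) atTop
      (𝓝 (p ^ 2)) := by
    have := (Real.continuous_sqrt.tendsto (p ^ 4)).comp hC4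
    have hsq : Real.sqrt (p ^ 4) = p ^ 2 := by
      rw [show p ^ 4 = (p ^ 2) ^ 2 by ring, Real.sqrt_sq (by positivity)]
    rwa [hsq] at this
  refine tendsto_of_tendsto_of_tendsto_of_le_of_le hlow hhigh ?_ ?_
  · exact fun n => ineq1 (H n)
  · intro n
    exact (Real.le_sqrt (homDensity_nonneg _ _) (homDensity_nonneg _ _)).mpr (ineq2 (H n))
end

section
/- The even 4-uniform hypergraph obtained from a Sidorenko graph is Sidorenko: if G is a Sidorenko 2-uniform graph and G̃ is the 4-uniform hypergraph on V(G) × {1,2} with hyperedges {u,v} × {1,2} for each edge {u,v} of G, then t(G̃, H) ≥ t(K₄^{(4)}, H)^{e(G)} for every 4-uniform hypergraph H, where K₄^{(4)} is a single 4-uniform edge on 4 vertices. -/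
/-!
A map `V × Fin 2 → W` is the same as a map `V → (Fin 2 → W)`, and it sends the hyperedge
`{u, v} × {1, 2}` into `H` exactly when the images of `u` and `v` are adjacent in the graph `H₂`
on `W²` joining distinct `(a, b)` and `(c, d)` when `{a, b, c, d} ∈ H`; the distinctness costs
nothing because the hyperedges of `H` have more than two vertices. Hence `t(G̃, H) = t(G, H₂)`, and since `K₄⁽⁴⁾` is
the even hypergraph of `K₂` up to relabelling, also `t(K₄⁽⁴⁾, H) = t(K₂, H₂)`. The Sidorenko
property of `G`, applied to `H₂`, is then the claim.
-/

open Finset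
open scoped Classical

/-- A hypergraph on vertex type `V` is given by its finite set of hyperedges. The
homomorphism density `t(G, H)` is the probability that a uniformly random map
`V(G) → V(H)` sends every hyperedge of `G` to a hyperedge of `H`. -/
noncomputable def hHomDensity {V W : Type} [Fintype V] [Fintype W]
    (G : Finset (Finset V)) (H : Finset (Finset W)) : ℝ :=
  ((Finset.univ.filter
      (fun f : V → W => ∀ e ∈ G, e.image f ∈ H)).card : ℝ) /
    (Fintype.card W : ℝ) ^ (Fintype.card V)

/-- The even 4-uniform hypergraph obtained from a 2-uniform graph `G`: on vertex set
`V(G) × {1,2}`, with hyperedges `{u,v} × {1,2}` for each edge `{u,v}` of `G`. -/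
noncomputable def evenHypergraph {V : Type} [Fintype V] (G : SimpleGraph V) :
    Finset (Finset (V × Fin 2)) :=
  G.edgeFinset.image (fun e =>
    (Finset.univ.filter (· ∈ e)) ×ˢ (Finset.univ : Finset (Fin 2)))

/-- A single 4-uniform edge `K₄⁽⁴⁾`. -/
def K4edge : Finset (Finset (Fin 4)) := {Finset.univ}

theorem hHomDensity_image_map_equiv {V V' W : Type} [Fintype V] [Fintype V'] [DecidableEq V']
    [Fintype W] (σ : V ≃ V') (G : Finset (Finset V)) (H : Finset (Finset W)) :
    hHomDensity (G.image (map σ.toEmbedding)) H = hHomDensity G H := by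
  unfold hHomDensity
  rw [Fintype.card_congr σ]
  congr 2
  refine card_equiv (σ.symm.arrowCongr (.refl W)) fun f => ?_
  simp only [mem_filter, mem_univ, true_and, forall_mem_image, map_eq_image, image_image]
  rfl

def tupleGraph {W : Type} (ι : Type) [Fintype ι] (H : Finset (Finset W)) :
    SimpleGraph (ι → W) where
  Adj g h := g ≠ h ∧ univ.image g ∪ univ.image h ∈ H
  symm := ⟨fun _ _ ⟨hne, hmem⟩ => ⟨hne.symm, union_comm (α := W) .. ▸ hmem⟩⟩
  loopless := ⟨fun _ h => h.1 rfl⟩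

theorem tupleGraph_adj {W ι : Type} [Fintype ι] {H : Finset (Finset W)}
    (hH : ∀ e ∈ H, Fintype.card ι < e.card) {g h : ι → W} :
    (tupleGraph ι H).Adj g h ↔ univ.image g ∪ univ.image h ∈ H := by
  refine ⟨fun hgh => hgh.2, fun hmem => ⟨?_, hmem⟩⟩
  rintro rfl
  rw [union_self] at hmem
  exact (card_image_le.trans_lt (hH _ hmem)).false

theorem image_evenEdge {V W : Type} [Fintype V] (u v : V) (f : V × Fin 2 → W) :
    ((univ.filter (· ∈ s(u, v))) ×ˢ (univ : Finset (Fin 2))).image f =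
      univ.image (Function.curry f u) ∪ univ.image (Function.curry f v) := by
  ext w
  simp [or_and_right, exists_or]

theorem evenHypergraph_hom_iff {V W : Type} [Fintype V] (G : SimpleGraph V)
    (H : Finset (Finset W)) (f : V × Fin 2 → W) :
    (∀ e ∈ evenHypergraph G, e.image f ∈ H) ↔ ∀ ⦃u v⦄, G.Adj u v →
      univ.image (Function.curry f u) ∪ univ.image (Function.curry f v) ∈ H := by
  simp only [evenHypergraph, forall_mem_image, SimpleGraph.mem_edgeFinset, Sym2.forall,
    SimpleGraph.mem_edgeSet, image_evenEdge]

theorem hHomDensity_evenHypergraph {V W : Type} [Fintype V] [Fintype W] (G : SimpleGraph V)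
    {H : Finset (Finset W)} (hH : ∀ e ∈ H, 2 < e.card) :
    hHomDensity (evenHypergraph G) H = homDensity G (tupleGraph (Fin 2) H) := by
  unfold hHomDensity homDensity
  congr 1
  · refine congrArg _ (card_equiv (Equiv.curry _ _ _) fun f => ?_)
    simp [evenHypergraph_hom_iff, tupleGraph_adj (ι := Fin 2) (by simpa using hH)]
  · simp [← pow_mul, mul_comm]

theorem evenHypergraph_top_fin_two : evenHypergraph (⊤ : SimpleGraph (Fin 2)) = {univ} := by
  have hmem : ∀ a : Sym2 (Fin 2), ¬a.IsDiag → ∀ x, x ∈ a := by decide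
  ext e
  simp only [evenHypergraph, mem_image, SimpleGraph.mem_edgeFinset, SimpleGraph.edgeSet_top,
    Set.mem_compl_iff, Sym2.mem_diagSet, mem_singleton]
  constructor
  · rintro ⟨a, ha, rfl⟩
    simp [hmem a ha]
  · rintro rfl
    exact ⟨s(0, 1), by simp, by ext; simp [hmem _ (by simp : ¬s((0 : Fin 2), 1).IsDiag)]⟩

theorem K4edge_eq : K4edge = (evenHypergraph (⊤ : SimpleGraph (Fin 2))).image
    (map (finProdFinEquiv.trans (finCongr (by norm_num : 2 * 2 = 4))).toEmbedding) := by
  rw [evenHypergraph_top_fin_two, image_singleton, map_univ_equiv]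
  rfl

/-- If `G` is a Sidorenko graph, then the even 4-uniform hypergraph obtained from it is
Sidorenko: `t(G̃, H) ≥ t(K₄⁽⁴⁾, H)^{e(G)}` for every 4-uniform hypergraph `H`. -/
theorem evenHypergraph_sidorenko {V : Type} [Fintype V] (G : SimpleGraph V)
    (hG : ∀ (W : Type) [Fintype W] (H : SimpleGraph W),
      homDensity G H ≥ homDensity (⊤ : SimpleGraph (Fin 2)) H ^ G.edgeFinset.card) :
    ∀ (W : Type) [Fintype W] (H : Finset (Finset W)), (∀ e ∈ H, e.card = 4) →
      hHomDensity (evenHypergraph G) H ≥ hHomDensity K4edge H ^ G.edgeFinset.card := by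
  intro W _ H hH
  have hH₂ : ∀ e ∈ H, 2 < e.card := fun e he => by simp [hH e he]
  have hK :
      hHomDensity K4edge H = homDensity (⊤ : SimpleGraph (Fin 2)) (tupleGraph (Fin 2) H) := by
    rw [K4edge_eq, hHomDensity_image_map_equiv, hHomDensity_evenHypergraph _ hH₂]
  rw [hHomDensity_evenHypergraph G hH₂, hK]
  exact hG _ _
end
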